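/- Let k be an integer with 0 ≤ k ≤ m-1, and define a = (γ^(2m) + γ^(m+6k+2) + γ^(3k+1))/(3γ^(m+3k+1)), b = (γ^(2m+3k+1) + γ^(m+6k+2) + 1)/(3γ^(m+3k+1)), c = (γ^(6k+2) + γ^(3k+1) + 1)/(3γ^(3k+1)) in F_q. Then the map g : F_q → F_q given by g(x) = a·x^(2m+1) + b·x^(m+1) + c·x is a bijection of F_q, satisfies g(g(x)) = x for all x ∈ F_q, and the set {x ∈ F_q : g(x) = x} has exactly m+1 elements. -/

import Mathlib

/-!
With `ω = γ^m`, `T = γ^(3k+1)` and `P y = a y² + b y + c` we have `g x = P (x^m) · x`. For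
`x ≠ 0`, `x^m` is a cube root of unity, and `a, b, c` are the coefficients of the quadratic
interpolating `P 1 = T`, `P ω = T⁻¹`, `P ω² = 1`. Since `T^m = ω`, multiplication by `T` maps
`{x^m = 1}` into `{x^m = ω}` and multiplication by `T⁻¹` maps it back, while `{x^m = ω²}` is fixed
pointwise. Hence `g` is an involution whose fixed points are `0` and the `m` roots of `x^m = ω²`.
-/

theorem IsPrimitiveRoot.eq_one_or_eq_or_eq_sq {R : Type*} [CommRing R] [IsDomain R] {ω y : R}
    (hω : IsPrimitiveRoot ω 3) (hy : y ^ 3 = 1) : y = 1 ∨ y = ω ∨ y = ω ^ 2 := by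
  obtain ⟨i, hi, rfl⟩ := hω.eq_pow_of_pow_eq_one hy
  interval_cases i <;> simp

theorem IsPrimitiveRoot.ncard_setOf_pow_eq {R : Type*} [CommRing R] [IsDomain R] {ζ : R} {n : ℕ}
    (hζ : IsPrimitiveRoot ζ n) (hn : 0 < n) {α : R} (hα : α ≠ 0) :
    {x : R | x ^ n = α ^ n}.ncard = n := by
  classical
  have hroots : {x : R | x ^ n = α ^ n} = ↑(Polynomial.nthRootsFinset n (α ^ n)) := by
    ext x; simp [Polynomial.mem_nthRootsFinset hn]
  rw [hroots, Set.ncard_coe_finset, Polynomial.nthRootsFinset_def,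
    Multiset.toFinset_card_of_nodup (hζ.nthRoots_nodup (pow_ne_zero n hα)),
    hζ.card_nthRoots, if_pos ⟨α, rfl⟩]

theorem IsPrimitiveRoot.sq_add_self_add_one {R : Type*} [CommRing R] [IsDomain R] {ω : R}
    (hω : IsPrimitiveRoot ω 3) : ω ^ 2 + ω + 1 = 0 := by
  have := hω.geom_sum_eq_zero (by norm_num)
  simp only [Finset.sum_range_succ, Finset.sum_range_zero] at this
  linear_combination this

theorem isPrimitiveRoot_of_forall_mem_zpowers {F : Type*} [Field F] [Fintype F] {γ : Fˣ}
    (hγ : ∀ x : Fˣ, x ∈ Subgroup.zpowers γ) : IsPrimitiveRoot (γ : F) (Fintype.card F - 1) := by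
  rw [← Nat.card_eq_fintype_card, ← Nat.card_units, ← orderOf_eq_card_of_forall_mem_zpowers hγ,
    ← orderOf_units]
  exact IsPrimitiveRoot.orderOf _

section Involution

variable {F : Type*} [Field F] {m : ℕ} {ω T : F} {P : F → F}

theorem involutive_mul_pow (hω : IsPrimitiveRoot ω 3) (hpow : ∀ x : F, x ≠ 0 → (x ^ m) ^ 3 = 1)
    (hTm : T ^ m = ω) (hP1 : P 1 = T) (hPω : P ω * T = 1) (hPω2 : P (ω ^ 2) = 1) :
    Function.Involutive fun x => P (x ^ m) * x := by
  intro x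
  rcases eq_or_ne x 0 with rfl | hx
  · simp
  rcases hω.eq_one_or_eq_or_eq_sq (hpow x hx) with h | h | h
  · have hTx : (T * x) ^ m = ω := by rw [mul_pow, hTm, h, mul_one]
    simp only [h, hP1, hTx]
    rw [← mul_assoc, hPω, one_mul]
  · have hTx : (P ω * x) ^ m = 1 := by rw [mul_pow, h, ← one_pow m, ← hPω, mul_pow, hTm]
    simp only [h, hTx, hP1]
    rw [← mul_assoc, mul_comm T, hPω, one_mul]
  · simp only [h, hPω2, one_mul]

theorem setOf_mul_pow_eq_self (hω : IsPrimitiveRoot ω 3) (hpow : ∀ x : F, x ≠ 0 → (x ^ m) ^ 3 = 1)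
    (hT : T ≠ 1) (hP1 : P 1 = T) (hPω : P ω * T = 1) (hPω2 : P (ω ^ 2) = 1) :
    {x : F | P (x ^ m) * x = x} = insert 0 {x | x ^ m = ω ^ 2} := by
  ext x
  rcases eq_or_ne x 0 with rfl | hx
  · simp
  simp only [Set.mem_ofPred_eq, Set.mem_insert_iff, mul_left_eq_self₀, hx, or_false, false_or]
  have hω21 : ω ^ 2 ≠ 1 := hω.pow_ne_one_of_pos_of_lt two_ne_zero (by norm_num)
  have hω2ω : ω ^ 2 ≠ ω := fun h => hω.ne_one (by norm_num) <| by
    simpa [sq, hω.ne_zero (by norm_num)] using h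
  rcases hω.eq_one_or_eq_or_eq_sq (hpow x hx) with h | h | h <;> rw [h]
  · exact iff_of_false (hP1 ▸ hT) hω21.symm
  · exact iff_of_false (fun h1 => hT (by simpa [h1] using hPω)) hω2ω.symm
  · exact iff_of_true hPω2 rfl

end Involution

theorem quadratic_interpolation_cube_roots {F : Type*} [Field F] {ω T a b c : F}
    (h3 : (3 : F) ≠ 0) (hω : ω ^ 2 + ω + 1 = 0) (hT : T ≠ 0)
    (ha : a = (ω ^ 2 + ω * T ^ 2 + T) / (3 * (ω * T)))
    (hb : b = (ω ^ 2 * T + ω * T ^ 2 + 1) / (3 * (ω * T)))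
    (hc : c = (T ^ 2 + T + 1) / (3 * T)) :
    a * 1 ^ 2 + b * 1 + c = T ∧ (a * ω ^ 2 + b * ω + c) * T = 1 ∧
      a * (ω ^ 2) ^ 2 + b * ω ^ 2 + c = 1 := by
  have hω0 : ω ≠ 0 := by rintro rfl; norm_num at hω
  subst ha hb hc
  refine ⟨?_, ?_, ?_⟩ <;> field_simp
  · linear_combination (1 + T) * hω
  · linear_combination (ω - 1 + T ^ 2 + T) * hω
  · linear_combination (1 + ω ^ 2 * (ω - 1) + T ^ 2 * (1 + ω * (ω - 1)) + 2 * T * (ω - 1)) * hω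

theorem stmt8_general (q m : ℕ) (F : Type*) [Field F] [Fintype F]
    (hq : Fintype.card F = q) (hq3 : q % 3 = 1)
    (hm : m = (q - 1) / 3)
    (γ : Fˣ) (hγ : ∀ x : Fˣ, x ∈ Subgroup.zpowers γ)
    (k : ℕ) (hk : k ≤ m - 1)
    (a b c : F)
    (ha : a = ((γ : F)^(2*m) + (γ : F)^(m+6*k+2) + (γ : F)^(3*k+1)) / (3 * (γ : F)^(m+3*k+1)))
    (hb : b = ((γ : F)^(2*m+3*k+1) + (γ : F)^(m+6*k+2) + 1) / (3 * (γ : F)^(m+3*k+1)))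
    (hc : c = ((γ : F)^(6*k+2) + (γ : F)^(3*k+1) + 1) / (3 * (γ : F)^(3*k+1)))
    (g : F → F)
    (hg : ∀ x : F, g x = a * x^(2*m+1) + b * x^(m+1) + c * x) :
    Function.Bijective g ∧ (∀ x : F, g (g x) = x) ∧
      {x : F | g x = x}.ncard = m + 1 := by
  have hqm : Fintype.card F - 1 = 3 * m := by omega
  have hm0 : 0 < m := by have := Fintype.one_lt_card (α := F); omega
  have hγ3m : IsPrimitiveRoot (γ : F) (3 * m) := hqm ▸ isPrimitiveRoot_of_forall_mem_zpowers hγ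
  set ω : F := (γ : F) ^ m
  set T : F := (γ : F) ^ (3 * k + 1)
  have hω : IsPrimitiveRoot ω 3 := hγ3m.pow (by omega) (mul_comm 3 m)
  have h3 : (3 : F) ≠ 0 := by exact_mod_cast hω.neZero'.out
  have hT1 : T ≠ 1 := hγ3m.pow_ne_one_of_pos_of_lt (by omega) (by omega)
  have hTm : T ^ m = ω := by
    rw [← pow_mul, show (3 * k + 1) * m = 3 * m * k + m by ring, pow_add, pow_mul,
      hγ3m.pow_eq_one, one_pow, one_mul]
  set P : F → F := fun y => a * y ^ 2 + b * y + c
  obtain ⟨hP1, hPω, hPω2⟩ : P 1 = T ∧ P ω * T = 1 ∧ P (ω ^ 2) = 1 :=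
    quadratic_interpolation_cube_roots h3 hω.sq_add_self_add_one (pow_ne_zero _ γ.ne_zero)
      (by rw [ha]; ring) (by rw [hb]; ring) (by rw [hc]; ring)
  have hpow : ∀ x : F, x ≠ 0 → (x ^ m) ^ 3 = 1 := fun x hx => by
    rw [← pow_mul, mul_comm, ← hqm]; exact FiniteField.pow_card_sub_one_eq_one x hx
  obtain rfl : g = fun x => P (x ^ m) * x := funext fun x => by rw [hg]; ring
  have hinv := involutive_mul_pow hω hpow hTm hP1 hPω hPω2
  refine ⟨hinv.bijective, hinv, ?_⟩
  have hω0 : ω ^ 2 ≠ 0 := pow_ne_zero 2 (hω.ne_zero (by norm_num))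
  have hωγ : ω ^ 2 = ((γ : F) ^ 2) ^ m := by ring
  rw [setOf_mul_pow_eq_self hω hpow hT1 hP1 hPω hPω2, Set.ncard_insert_of_notMem
    (by simpa [zero_pow hm0.ne'] using hω0.symm), hωγ,
    (hγ3m.pow (by omega) rfl).ncard_setOf_pow_eq hm0 (pow_ne_zero 2 γ.ne_zero)]

theorem stmt8 (q m : ℕ) (F : Type*) [Field F] [Fintype F]
    (hq : Fintype.card F = q) (hodd : Odd q) (hq3 : q % 3 = 1)
    (hm : m = (q - 1) / 3)
    (γ : Fˣ) (hγ : ∀ x : Fˣ, x ∈ Subgroup.zpowers γ)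
    (k : ℕ) (hk : k ≤ m - 1)
    (a b c : F)
    (ha : a = ((γ : F)^(2*m) + (γ : F)^(m+6*k+2) + (γ : F)^(3*k+1)) / (3 * (γ : F)^(m+3*k+1)))
    (hb : b = ((γ : F)^(2*m+3*k+1) + (γ : F)^(m+6*k+2) + 1) / (3 * (γ : F)^(m+3*k+1)))
    (hc : c = ((γ : F)^(6*k+2) + (γ : F)^(3*k+1) + 1) / (3 * (γ : F)^(3*k+1)))
    (g : F → F)
    (hg : ∀ x : F, g x = a * x^(2*m+1) + b * x^(m+1) + c * x) :
    Function.Bijective g ∧ (∀ x : F, g (g x) = x) ∧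
      {x : F | g x = x}.ncard = m + 1 :=
  stmt8_general q m F hq hq3 hm γ hγ k hk a b c ha hb hc g hg
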